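/- Let K ≥ 1 be an integer and let α₀' and α_k, α_k', β_k, β_k' (1 ≤ k ≤ K) be real numbers. For r > 0 define B_r(r,φ) and B_φ(r,φ) as the radial and angular flux density components of the air-gap ansatz, namely B_r(r,φ) = (1/r)·Σ_{k=1}^K k·cos(kφ)·(β_k r^k + β_k' r^{−k}) − (1/r)·Σ_{k=1}^K k·sin(kφ)·(α_k r^k + α_k' r^{−k}) and B_φ(r,φ) = −α₀'/r − (1/r)·Σ_{k=1}^K k·cos(kφ)·(α_k r^k − α_k' r^{−k}) − (1/r)·Σ_{k=1}^K k·sin(kφ)·(β_k r^k − β_k' r^{−k}). Then for any two radii r₁, r₂ > 0: r₁²·∫₀^{2π} B_r(r₁,φ)·B_φ(r₁,φ) dφ = r₂²·∫₀^{2π} B_r(r₂,φ)·B_φ(r₂,φ) dφ. In particular the Maxwell-stress torque T = (r² L/μ₀) ∫₀^{2π} B_r B_φ dφ is independent of the radius r of the integration circle inside the air-gap. -/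

import Mathlib

open Real MeasureTheory

lemma int_cos_int (m : ℤ) : ∫ x in (0:ℝ)..(2*π), Real.cos (m*x) = if m = 0 then 2*π else 0 := by
  split_ifs with h
  · subst h; simp
  · have hm : ((m:ℝ)) ≠ 0 := Int.cast_ne_zero.mpr h
    rw [intervalIntegral.integral_comp_mul_left Real.cos hm]
    rw [integral_cos]
    have h1 : Real.sin ((m:ℝ) * (2*π)) = 0 := by
      have : ((m:ℝ)) * (2*π) = ((2*m : ℤ) : ℝ) * π := by push_cast; ring
      rw [this, Real.sin_int_mul_pi]
    simp [h1]

lemma int_sin_int (m : ℤ) : ∫ x in (0:ℝ)..(2*π), Real.sin (m*x) = 0 := by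
  rcases eq_or_ne m 0 with h | h
  · subst h; simp
  · have hm : ((m:ℝ)) ≠ 0 := Int.cast_ne_zero.mpr h
    rw [intervalIntegral.integral_comp_mul_left Real.sin hm]
    rw [integral_sin]
    have h1 : Real.cos ((m:ℝ) * (2*π)) = 1 := by
      have : ((m:ℝ)) * (2*π) = ((m : ℤ) : ℝ) * (2*π) := by ring
      rw [this, Real.cos_int_mul_two_pi]
    simp [h1]


lemma contInt (f : ℝ → ℝ) (hf : Continuous f) : IntervalIntegrable f volume 0 (2*π) :=
  hf.intervalIntegrable 0 (2*π)

lemma key0 (k : ℕ) (hk : 1 ≤ k) (c1 c2 : ℝ) :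
    ∫ φ in (0:ℝ)..(2*π), (c1 * Real.cos (k*φ) + c2 * Real.sin (k*φ)) = 0 := by
  have hcc : ∀ φ : ℝ, Real.cos ((k:ℝ)*φ) = Real.cos (((k:ℤ):ℝ)*φ) := by intro φ; norm_num
  have hss : ∀ φ : ℝ, Real.sin ((k:ℝ)*φ) = Real.sin (((k:ℤ):ℝ)*φ) := by intro φ; norm_num
  have h1 : IntervalIntegrable (fun φ => c1 * Real.cos ((k:ℝ)*φ)) volume 0 (2*π) :=
    contInt _ (by fun_prop)
  have h2 : IntervalIntegrable (fun φ => c2 * Real.sin ((k:ℝ)*φ)) volume 0 (2*π) :=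
    contInt _ (by fun_prop)
  rw [intervalIntegral.integral_add h1 h2, intervalIntegral.integral_const_mul,
    intervalIntegral.integral_const_mul]
  simp_rw [hcc, hss]
  rw [int_sin_int, int_cos_int]
  have : (k:ℤ) ≠ 0 := by omega
  simp [this]
  intro h0; omega

lemma key (k l : ℕ) (hk : 1 ≤ k) (hl : 1 ≤ l) (c1 c2 c3 c4 : ℝ) :
    ∫ φ in (0:ℝ)..(2*π),
      (c1 * Real.cos (k*φ) + c2 * Real.sin (k*φ)) * (c3 * Real.cos (l*φ) + c4 * Real.sin (l*φ))
    = if k = l then π * (c1*c3 + c2*c4) else 0 := by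
  have hpt : ∀ φ : ℝ,
      (c1 * Real.cos (k*φ) + c2 * Real.sin (k*φ)) * (c3 * Real.cos (l*φ) + c4 * Real.sin (l*φ))
      = ((c1*c3+c2*c4)/2) * Real.cos ((((k:ℤ)-l : ℤ):ℝ)*φ)
        + ((c1*c3-c2*c4)/2) * Real.cos ((((k:ℤ)+l : ℤ):ℝ)*φ)
        + ((c1*c4+c2*c3)/2) * Real.sin ((((k:ℤ)+l : ℤ):ℝ)*φ)
        + ((c2*c3-c1*c4)/2) * Real.sin ((((k:ℤ)-l : ℤ):ℝ)*φ) := by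
    intro φ
    have e1 : (((k:ℤ)-l : ℤ):ℝ)*φ = (k:ℝ)*φ - (l:ℝ)*φ := by push_cast; ring
    have e2 : (((k:ℤ)+l : ℤ):ℝ)*φ = (k:ℝ)*φ + (l:ℝ)*φ := by push_cast; ring
    rw [e1, e2, Real.cos_sub, Real.cos_add, Real.sin_add, Real.sin_sub]
    ring
  simp_rw [hpt]
  have I : ∀ c : ℝ, ∀ m : ℤ, IntervalIntegrable (fun φ => c * Real.cos ((m:ℝ)*φ)) volume 0 (2*π) :=
    fun c m => contInt _ (by fun_prop)
  have I' : ∀ c : ℝ, ∀ m : ℤ, IntervalIntegrable (fun φ => c * Real.sin ((m:ℝ)*φ)) volume 0 (2*π) :=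
    fun c m => contInt _ (by fun_prop)
  rw [intervalIntegral.integral_add (((I _ _).add (I _ _)).add (I' _ _)) (I' _ _),
    intervalIntegral.integral_add ((I _ _).add (I _ _)) (I' _ _),
    intervalIntegral.integral_add (I _ _) (I _ _)]
  simp_rw [intervalIntegral.integral_const_mul]
  rw [int_cos_int, int_cos_int, int_sin_int, int_sin_int]
  have h2 : ((k:ℤ)+l) ≠ 0 := by omega
  have h3 : ((k:ℤ)-l = 0) ↔ (k = l) := by omega
  by_cases h : k = l
  · have hl' : l ≠ 0 := by omega
    simp [h, h3.mpr h, hl']; ring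
  · simp [h2, h, fun hh => h (h3.mp hh)]
    intro hh; exact absurd (h3.mp hh) h


lemma torque_val (K : ℕ) (a₀' : ℝ) (a a' b b' : ℕ → ℝ)
    (Br Bphi : ℝ → ℝ → ℝ)
    (hBr : ∀ r φ : ℝ, 0 < r → Br r φ =
      (1 / r) * ∑ k ∈ Finset.Icc 1 K,
          (k : ℝ) * Real.cos (k * φ) * (b k * r ^ k + b' k * r ^ (-(k : ℤ)))
      - (1 / r) * ∑ k ∈ Finset.Icc 1 K,
          (k : ℝ) * Real.sin (k * φ) * (a k * r ^ k + a' k * r ^ (-(k : ℤ))))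
    (hBphi : ∀ r φ : ℝ, 0 < r → Bphi r φ =
      -(a₀' / r)
      - (1 / r) * ∑ k ∈ Finset.Icc 1 K,
          (k : ℝ) * Real.cos (k * φ) * (a k * r ^ k - a' k * r ^ (-(k : ℤ)))
      - (1 / r) * ∑ k ∈ Finset.Icc 1 K,
          (k : ℝ) * Real.sin (k * φ) * (b k * r ^ k - b' k * r ^ (-(k : ℤ))))
    (r : ℝ) (hr : 0 < r) :
    r ^ 2 * (∫ φ in (0:ℝ)..(2 * π), Br r φ * Bphi r φ)
      = 2 * π * ∑ k ∈ Finset.Icc 1 K, (k:ℝ)^2 * (a' k * b k - a k * b' k) := by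
  set p1 : ℕ → ℝ := fun k => (k:ℝ) * (b k * r ^ k + b' k * r ^ (-(k:ℤ))) with hp1
  set p2 : ℕ → ℝ := fun k => -((k:ℝ) * (a k * r ^ k + a' k * r ^ (-(k:ℤ)))) with hp2
  set q1 : ℕ → ℝ := fun k => -((k:ℝ) * (a k * r ^ k - a' k * r ^ (-(k:ℤ)))) with hq1
  set q2 : ℕ → ℝ := fun k => -((k:ℝ) * (b k * r ^ k - b' k * r ^ (-(k:ℤ)))) with hq2
  set F : ℕ → ℝ → ℝ := fun k φ => p1 k * Real.cos (k*φ) + p2 k * Real.sin (k*φ) with hF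
  set G : ℕ → ℝ → ℝ := fun k φ => q1 k * Real.cos (k*φ) + q2 k * Real.sin (k*φ) with hG
  have hrne : r ≠ 0 := hr.ne'
  -- pointwise expansion of the integrand
  have hprod : ∀ φ : ℝ, Br r φ * Bphi r φ
      = (1/r^2) * ((∑ k ∈ Finset.Icc 1 K, F k φ * (-a₀'))
          + ∑ k ∈ Finset.Icc 1 K, ∑ l ∈ Finset.Icc 1 K, F k φ * G l φ) := by
    intro φ
    have eP : ∑ k ∈ Finset.Icc 1 K, F k φ
        = (∑ k ∈ Finset.Icc 1 K, (k : ℝ) * Real.cos (k * φ) * (b k * r ^ k + b' k * r ^ (-(k:ℤ))))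
          - ∑ k ∈ Finset.Icc 1 K, (k : ℝ) * Real.sin (k * φ) * (a k * r ^ k + a' k * r ^ (-(k:ℤ))) := by
      rw [← Finset.sum_sub_distrib]
      exact Finset.sum_congr rfl fun k _ => by simp only [hF, hp1, hp2]; ring
    have eQ : ∑ k ∈ Finset.Icc 1 K, G k φ
        = -(∑ k ∈ Finset.Icc 1 K, (k : ℝ) * Real.cos (k * φ) * (a k * r ^ k - a' k * r ^ (-(k:ℤ))))
          - ∑ k ∈ Finset.Icc 1 K, (k : ℝ) * Real.sin (k * φ) * (b k * r ^ k - b' k * r ^ (-(k:ℤ))) := by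
      have step : ∑ k ∈ Finset.Icc 1 K, G k φ
          = ∑ k ∈ Finset.Icc 1 K, (-((k : ℝ) * Real.cos (k * φ) * (a k * r ^ k - a' k * r ^ (-(k:ℤ))))
              - (k : ℝ) * Real.sin (k * φ) * (b k * r ^ k - b' k * r ^ (-(k:ℤ)))) :=
        Finset.sum_congr rfl fun k _ => by simp only [hG, hq1, hq2]; ring
      rw [step, Finset.sum_sub_distrib, Finset.sum_neg_distrib]
    have expand : (∑ k ∈ Finset.Icc 1 K, F k φ) * (-a₀' + ∑ l ∈ Finset.Icc 1 K, G l φ)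
        = (∑ k ∈ Finset.Icc 1 K, F k φ * (-a₀'))
          + ∑ k ∈ Finset.Icc 1 K, ∑ l ∈ Finset.Icc 1 K, F k φ * G l φ := by
      rw [mul_add, Finset.sum_mul, Finset.sum_mul_sum]
    rw [← expand, hBr r φ hr, hBphi r φ hr, eP, eQ]
    ring
  have hFc : ∀ k : ℕ, Continuous (F k) := fun k => by simp only [hF]; fun_prop
  have hGc : ∀ k : ℕ, Continuous (G k) := fun k => by simp only [hG]; fun_prop
  -- compute the integral
  rw [intervalIntegral.integral_congr (g := fun φ => (1/r^2) * ((∑ k ∈ Finset.Icc 1 K, F k φ * (-a₀'))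
          + ∑ k ∈ Finset.Icc 1 K, ∑ l ∈ Finset.Icc 1 K, F k φ * G l φ)) (fun φ _ => hprod φ)]
  rw [intervalIntegral.integral_const_mul]
  have int1 : IntervalIntegrable (fun φ => ∑ k ∈ Finset.Icc 1 K, F k φ * (-a₀')) volume 0 (2*π) :=
    contInt _ (continuous_finset_sum _ fun k _ => (hFc k).mul continuous_const)
  have int2 : IntervalIntegrable (fun φ => ∑ k ∈ Finset.Icc 1 K, ∑ l ∈ Finset.Icc 1 K, F k φ * G l φ) volume 0 (2*π) :=
    contInt _ (continuous_finset_sum _ fun k _ => continuous_finset_sum _ fun l _ => (hFc k).mul (hGc l))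
  rw [intervalIntegral.integral_add int1 int2]
  have e1 : (∫ φ in (0:ℝ)..(2*π), ∑ k ∈ Finset.Icc 1 K, F k φ * (-a₀')) = 0 := by
    rw [intervalIntegral.integral_finset_sum
      (fun k _ => contInt _ (by exact (hFc k).mul continuous_const))]
    apply Finset.sum_eq_zero
    intro k hk
    have hk1 : 1 ≤ k := (Finset.mem_Icc.mp hk).1
    rw [intervalIntegral.integral_mul_const, key0 k hk1, zero_mul]
  have e2 : (∫ φ in (0:ℝ)..(2*π), ∑ k ∈ Finset.Icc 1 K, ∑ l ∈ Finset.Icc 1 K, F k φ * G l φ)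
      = ∑ k ∈ Finset.Icc 1 K, π * (p1 k * q1 k + p2 k * q2 k) := by
    rw [intervalIntegral.integral_finset_sum (fun k _ => contInt _ (by
      exact continuous_finset_sum _ fun l _ => (hFc k).mul (hGc l)))]
    apply Finset.sum_congr rfl
    intro k hk
    have hk1 : 1 ≤ k := (Finset.mem_Icc.mp hk).1
    rw [intervalIntegral.integral_finset_sum (f := fun l φ => F k φ * G l φ) (fun l _ => contInt _ ((hFc k).mul (hGc l)))]
    have : ∀ l ∈ Finset.Icc 1 K, (∫ φ in (0:ℝ)..(2*π), F k φ * G l φ)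
        = if k = l then π * (p1 k * q1 l + p2 k * q2 l) else 0 := by
      intro l hl
      exact key k l hk1 (Finset.mem_Icc.mp hl).1 (p1 k) (p2 k) (q1 l) (q2 l)
    rw [Finset.sum_congr rfl this, Finset.sum_ite_eq, if_pos hk]
  rw [e1, e2, zero_add, Finset.mul_sum, Finset.mul_sum]
  rw [Finset.mul_sum]
  apply Finset.sum_congr rfl
  intro k _
  have hrk : r ^ k * r ^ (-(k:ℤ)) = 1 := by
    rw [← zpow_natCast r k, ← zpow_add₀ hrne]; simp
  have hclear : r ^ 2 * (1 / r ^ 2 * (π * (p1 k * q1 k + p2 k * q2 k)))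
      = π * (p1 k * q1 k + p2 k * q2 k) := by field_simp
  rw [hclear]
  simp only [hp1, hp2, hq1, hq2]
  linear_combination (2 * π * (k:ℝ)^2 * (a' k * b k - a k * b' k)) * hrk

/-- The Maxwell-stress torque integral `r² ∫ B_r B_φ dφ` over a circle inside
the air-gap is independent of the radius of the integration circle. -/
theorem airgap_torque_radius_independent (K : ℕ) (hK : 1 ≤ K)
    (a₀' : ℝ) (a a' b b' : ℕ → ℝ)
    (Br Bphi : ℝ → ℝ → ℝ)
    (hBr : ∀ r φ : ℝ, 0 < r → Br r φ =
      (1 / r) * ∑ k ∈ Finset.Icc 1 K,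
          (k : ℝ) * Real.cos (k * φ) * (b k * r ^ k + b' k * r ^ (-(k : ℤ)))
      - (1 / r) * ∑ k ∈ Finset.Icc 1 K,
          (k : ℝ) * Real.sin (k * φ) * (a k * r ^ k + a' k * r ^ (-(k : ℤ))))
    (hBphi : ∀ r φ : ℝ, 0 < r → Bphi r φ =
      -(a₀' / r)
      - (1 / r) * ∑ k ∈ Finset.Icc 1 K,
          (k : ℝ) * Real.cos (k * φ) * (a k * r ^ k - a' k * r ^ (-(k : ℤ)))
      - (1 / r) * ∑ k ∈ Finset.Icc 1 K,
          (k : ℝ) * Real.sin (k * φ) * (b k * r ^ k - b' k * r ^ (-(k : ℤ))))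
    (r₁ r₂ : ℝ) (hr₁ : 0 < r₁) (hr₂ : 0 < r₂) :
    r₁ ^ 2 * (∫ φ in (0:ℝ)..(2 * π), Br r₁ φ * Bphi r₁ φ) =
      r₂ ^ 2 * (∫ φ in (0:ℝ)..(2 * π), Br r₂ φ * Bphi r₂ φ) := by
  rw [torque_val K a₀' a a' b b' Br Bphi hBr hBphi r₁ hr₁,
    torque_val K a₀' a a' b b' Br Bphi hBr hBphi r₂ hr₂]
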